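/- arXiv:2509.20002 — 6 statements merged into one kernel-verified Lean document; each statement's English description precedes it below -/
import Mathlib

section
/- Let X be a Banach space and (g_m) a sequence in X* \ {0} such that there exists C > 0 with ∑_{m=1}^∞ |g_m(x)| ≤ C‖x‖ for all x ∈ X. Then for every sequence of positive reals (a_n) with ∑_{n=1}^∞ a_n^{-1} = ∞, the zero functional is a weak-* cluster point of the sequence (a_n g_n) in X*. -/
/- If `∑ gₘ(x)` converges absolutely for each `x`, then so does `∑ₘ ∑_{x ∈ s} |gₘ(x)|`;
were `aₘ ∑_{x ∈ s} |gₘ(x)| ≥ ε` for all large `m`, comparison would make `∑ aₘ⁻¹` converge. -/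

open Filter

theorem frequently_mul_lt_of_not_summable_inv {a u : ℕ → ℝ} (ha : ∀ n, 0 < a n)
    (hu : Summable u) (hdiv : ¬ Summable fun n => (a n)⁻¹) {ε : ℝ} (hε : 0 < ε) :
    ∃ᶠ n in atTop, a n * u n < ε := by
  by_contra h
  simp only [not_frequently, not_lt] at h
  refine hdiv (Summable.of_norm_bounded_eventually_nat (hu.mul_left ε⁻¹) ?_)
  filter_upwards [h] with n hn
  rw [Real.norm_of_nonneg (inv_nonneg.2 (ha n).le), inv_le_iff_one_le_mul₀ (ha n),
    mul_right_comm, mul_assoc, ← div_eq_inv_mul, one_le_div hε]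
  exact hn

theorem stmt_1_general {X : Type*} [NormedAddCommGroup X] [NormedSpace ℝ X]
    (g : ℕ → X →L[ℝ] ℝ)
    (C : ℝ)
    (hbound : ∀ x : X, ∀ n : ℕ, ∑ m ∈ Finset.range n, |g m x| ≤ C * ‖x‖)
    (a : ℕ → ℝ) (ha : ∀ n, 0 < a n)
    (hdiv : ¬ Summable (fun n => (a n)⁻¹)) :
    ∀ (s : Finset X) (ε : ℝ), 0 < ε → ∀ N : ℕ,
      ∃ m ≥ N, ∀ x ∈ s, |a m * g m x| < ε := by
  intro s ε hε N
  have habs : ∀ x, Summable fun m => |g m x| := fun x =>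
    summable_of_sum_range_le (fun _ => abs_nonneg _) (hbound x)
  obtain ⟨m, hmN, hm⟩ := (frequently_mul_lt_of_not_summable_inv ha
    (summable_sum fun x _ => habs x) hdiv hε).forall_exists_of_atTop N
  refine ⟨m, hmN, fun x hx => ?_⟩
  calc |a m * g m x| = a m * |g m x| := by rw [abs_mul, abs_of_pos (ha m)]
    _ ≤ a m * ∑ y ∈ s, |g m y| := by
      gcongr
      · exact (ha m).le
      · exact Finset.single_le_sum (fun y _ => abs_nonneg (g m y)) hx
    _ < ε := hm

/-- If the partial sums `∑ |g_m(x)|` are uniformly dominated by `C‖x‖` and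
`∑ aₙ⁻¹ = ∞`, then `0` is a weak-* cluster point of `(aₙ gₙ)`. -/
theorem stmt_1 {X : Type*} [NormedAddCommGroup X] [NormedSpace ℝ X]
    (g : ℕ → X →L[ℝ] ℝ) (hg0 : ∀ m, g m ≠ 0)
    (C : ℝ) (hC : 0 < C)
    (hbound : ∀ x : X, ∀ n : ℕ, ∑ m ∈ Finset.range n, |g m x| ≤ C * ‖x‖)
    (a : ℕ → ℝ) (ha : ∀ n, 0 < a n)
    (hdiv : ¬ Summable (fun n => (a n)⁻¹)) :
    ∀ (s : Finset X) (ε : ℝ), 0 < ε → ∀ N : ℕ,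
      ∃ m ≥ N, ∀ x ∈ s, |a m * g m x| < ε :=
  stmt_1_general g C hbound a ha hdiv
end

section
/- Let X, Y be Banach spaces, 𝔉 a free filter on ℕ, and (a_n) a sequence of positive reals. Suppose there exists a sequence of bounded linear operators T_n : X → Y with ‖T_n‖ = a_n such that 𝔉-lim ‖T_n x‖ = 0 for every x ∈ X. Then there exists a sequence of functionals x_n* ∈ X* with ‖x_n*‖ = a_n and 𝔉-lim x_n*(x) = 0 for every x ∈ X. -/
/-- From a sequence of operators `Tₙ : X → Y` with `‖Tₙ‖ = aₙ` and
`𝔉-lim ‖Tₙ x‖ = 0` one obtains functionals `xₙ* ∈ X*` with `‖xₙ*‖ = aₙ`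
and `𝔉-lim xₙ*(x) = 0`. -/
theorem stmt_4 {X Y : Type*}
    [NormedAddCommGroup X] [NormedSpace ℝ X] [CompleteSpace X]
    [NormedAddCommGroup Y] [NormedSpace ℝ Y] [CompleteSpace Y]
    (F : Filter ℕ) (hF : Filter.cofinite ≤ F)
    (a : ℕ → ℝ) (ha : ∀ n, 0 < a n)
    (T : ℕ → X →L[ℝ] Y) (hT : ∀ n, ‖T n‖ = a n)
    (hlim : ∀ x : X, Filter.Tendsto (fun n => ‖T n x‖) F (nhds 0)) :
    ∃ f : ℕ → X →L[ℝ] ℝ, (∀ n, ‖f n‖ = a n) ∧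
      ∀ x : X, Filter.Tendsto (fun n => f n x) F (nhds 0) := by
  -- choose xₙ with ‖xₙ‖ < 1, ‖Tₙ xₙ‖ > aₙ/2
  have hx : ∀ n, ∃ x : X, ‖x‖ < 1 ∧ a n / 2 < ‖T n x‖ := fun n =>
    (T n).exists_lt_apply_of_lt_opNorm (by rw [hT n]; linarith [ha n])
  choose x hx1 hx2 using hx
  have hTx0 : ∀ n, T n (x n) ≠ 0 := fun n => by
    intro h
    have := hx2 n
    rw [h, norm_zero] at this
    linarith [ha n]
  have hy : ∀ n, ∃ g : Y →L[ℝ] ℝ, ‖g‖ = 1 ∧ g (T n (x n)) = ‖T n (x n)‖ := fun n =>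
    exists_dual_vector ℝ _ (norm_ne_zero_iff.mpr (hTx0 n))
  choose y hy1 hy2 using hy
  set g : ℕ → X →L[ℝ] ℝ := fun n => (y n).comp (T n) with hg
  have hgle : ∀ n, ‖g n‖ ≤ a n := fun n => by
    calc ‖(y n).comp (T n)‖ ≤ ‖y n‖ * ‖T n‖ := ContinuousLinearMap.opNorm_comp_le _ _
    _ = a n := by rw [hy1 n, hT n, one_mul]
  have hglb : ∀ n, a n / 2 < ‖g n‖ := fun n => by
    have h1 : ‖g n (x n)‖ ≤ ‖g n‖ * ‖x n‖ := (g n).le_opNorm _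
    have h2 : ‖g n (x n)‖ = ‖T n (x n)‖ := by
      simp [hg, ContinuousLinearMap.comp_apply, hy2 n, abs_of_nonneg (norm_nonneg _),
        Real.norm_eq_abs]
    have hgn : 0 ≤ ‖g n‖ := norm_nonneg _
    nlinarith [hx1 n, hx2 n, norm_nonneg (x n), ha n]
  have hgpos : ∀ n, 0 < ‖g n‖ := fun n => lt_trans (by linarith [ha n]) (hglb n)
  refine ⟨fun n => (a n / ‖g n‖) • g n, fun n => ?_, fun z => ?_⟩
  · show ‖(a n / ‖g n‖) • g n‖ = a n
    rw [norm_smul (a n / ‖g n‖) (g n), Real.norm_eq_abs, abs_of_pos (div_pos (ha n) (hgpos n))]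
    exact div_mul_cancel₀ _ (ne_of_gt (hgpos n))
  · -- |fₙ z| ≤ 2 ‖Tₙ z‖
    have key : ∀ n, |((a n / ‖g n‖) • g n) z| ≤ 2 * ‖T n z‖ := fun n => by
      have h1 : |g n z| ≤ ‖T n z‖ := by
        have := (y n).le_opNorm (T n z)
        simpa [hg, ContinuousLinearMap.comp_apply, hy1 n, Real.norm_eq_abs] using this
      have h2 : a n / ‖g n‖ ≤ 2 := by
        rw [div_le_iff₀ (hgpos n)]
        linarith [hglb n]
      have h3 : 0 ≤ a n / ‖g n‖ := le_of_lt (div_pos (ha n) (hgpos n))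
      calc |((a n / ‖g n‖) • g n) z| = (a n / ‖g n‖) * |g n z| := by
            simp [abs_mul, abs_of_nonneg h3]
      _ ≤ 2 * ‖T n z‖ := by
            apply mul_le_mul h2 h1 (abs_nonneg _) (by norm_num)
    have h2 : Filter.Tendsto (fun n => 2 * ‖T n z‖) F (nhds 0) := by
      simpa using (hlim z).const_mul 2
    refine squeeze_zero_norm (fun n => ?_) h2
    rw [Real.norm_eq_abs]
    exact key n
end

section
/- Let s = (s_k) ⊆ [0,1] with ∑ s_k = ∞ and let (a_k) be a sequence of positive reals. Then the following are equivalent: (i) for every D ⊆ ℕ with ∑_{k ∈ D} s_k = ∞ one has ∑_{k ∈ D} a_k^{-1} = ∞; (ii) there exists A ⊆ ℕ with ∑_{k ∉ A} s_k < ∞ and sup_{n ∈ A} a_n s_n < ∞. -/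
/-!
If `a n * s n ≤ M` on `A`, then `s n ≤ M / a n` there, so on any `D` the mass `∑_D s` is bounded
by the summable tail `∑_{Aᶜ} s` plus `M ∑_D a⁻¹`.

Conversely, if no such `A` exists, every superlevel set `{a n * s n > 2 ^ j}` carries divergent
`s`-mass. Since `s ≤ 1`, one can cut from it a finite block, disjoint from the earlier blocks, of
`s`-mass between `1` and `2`. On the union `D` of the blocks `∑_D s` diverges, while
`a⁻¹ < s / 2 ^ j` on the `j`-th block gives `∑_D a⁻¹ ≤ ∑_j 2 ^ (1 - j) < ∞`.
-/

open Finset Function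

theorem summable_indicator_iUnion_finset_iff {ι α : Type*} {g : α → ℝ} (hg : 0 ≤ g)
    {F : ι → Finset α} (hF : Pairwise (Disjoint on F)) :
    Summable ((⋃ i, (F i : Set α)).indicator g) ↔ Summable fun i => ∑ x ∈ F i, g x := by
  have hF' : Pairwise (Disjoint on fun i => (F i : Set α)) :=
    fun i j hij => Finset.disjoint_coe.2 (hF hij)
  rw [← summable_subtype_iff_indicator, ← (Set.unionEqSigmaOfDisjoint hF').symm.summable_iff]
  refine (summable_sigma_of_nonneg fun _ => hg _).trans ?_
  simp only [SetLike.coe_sort_coe, Set.coe_unionEqSigmaOfDisjoint_symm_apply, tsum_fintype,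
    univ_eq_attach, sum_attach]
  exact and_iff_right fun _ => Summable.of_finite

theorem exists_subset_one_le_sum_le_two {α : Type*} {f : α → ℝ} (hf : ∀ x, f x ≤ 1)
    (F : Finset α) (hF : 1 ≤ ∑ x ∈ F, f x) :
    ∃ F' ⊆ F, 1 ≤ ∑ x ∈ F', f x ∧ ∑ x ∈ F', f x ≤ 2 := by
  classical
  induction F using strongInduction with
  | H F ih =>
    by_cases hle : ∑ x ∈ F, f x ≤ 2
    · exact ⟨F, subset_rfl, hF, hle⟩
    obtain ⟨x, hx⟩ : F.Nonempty := nonempty_of_sum_ne_zero (f := f) (by linarith)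
    have hx1 : 1 ≤ ∑ y ∈ F.erase x, f y := by
      rw [sum_erase_eq_sub hx]; linarith [hf x]
    obtain ⟨F', hF', h1, h2⟩ := ih _ (erase_ssubset hx) hx1
    exact ⟨F', hF'.trans (erase_subset x F), h1, h2⟩

theorem exists_finset_disjoint_subset_one_le_sum_le_two {α : Type*} {f : α → ℝ}
    (hf₀ : 0 ≤ f) (hf₁ : ∀ x, f x ≤ 1) {E : Set α} (hE : ¬Summable (E.indicator f)) (G : Finset α) :
    ∃ F : Finset α, Disjoint F G ∧ ↑F ⊆ E ∧ 1 ≤ ∑ x ∈ F, f x ∧ ∑ x ∈ F, f x ≤ 2 := by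
  classical
  obtain ⟨T, hT⟩ : ∃ T : Finset α, 1 + ∑ x ∈ G, f x < ∑ x ∈ T, E.indicator f x := by
    by_contra! h
    exact hE (summable_of_sum_le (Set.indicator_nonneg fun x _ => hf₀ x) h)
  set F₀ := {x ∈ T | x ∈ E} \ G
  have hF₀ : 1 ≤ ∑ x ∈ F₀, f x := by
    have hsplit := sum_sdiff (f := f) (inter_subset_left (s₁ := {x ∈ T | x ∈ E}) (s₂ := G))
    rw [sdiff_inter_self_left] at hsplit
    have hG : ∑ x ∈ {x ∈ T | x ∈ E} ∩ G, f x ≤ ∑ x ∈ G, f x :=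
      sum_le_sum_of_subset_of_nonneg inter_subset_right fun x _ _ => hf₀ x
    rw [sum_indicator_eq_sum_filter] at hT
    linarith
  obtain ⟨F, hFF₀, h₁, h₂⟩ := exists_subset_one_le_sum_le_two hf₁ F₀ hF₀
  refine ⟨F, disjoint_of_subset_left hFF₀ sdiff_disjoint, fun x hx => ?_, h₁, h₂⟩
  exact (mem_filter.1 (mem_sdiff.1 (hFF₀ hx)).1).2

theorem exists_pairwise_disjoint_finset_seq {α : Type*} [DecidableEq α]
    (P : ℕ → Finset α → Prop)
    (h : ∀ n (G : Finset α), ∃ F, Disjoint F G ∧ P n F) :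
    ∃ F : ℕ → Finset α, Pairwise (Disjoint on F) ∧ ∀ n, P n (F n) := by
  choose next hnext_disj hnext using h
  let past : ℕ → Finset α := fun n => Nat.rec ∅ (fun k G => G ∪ next k G) n
  have hpast_mono : Monotone past :=
    monotone_nat_of_le_succ fun n => subset_union_left
  have hdisj {m n : ℕ} (hmn : m < n) : Disjoint (next n (past n)) (next m (past m)) :=
    (hnext_disj n (past n)).mono_right
      (subset_union_right.trans (hpast_mono (Nat.succ_le_of_lt hmn)))
  refine ⟨fun n => next n (past n), fun m n hmn => ?_, fun n => hnext _ _⟩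
  rcases hmn.lt_or_gt with hlt | hlt
  exacts [(hdisj hlt).symm, hdisj hlt]

theorem summable_indicator_of_summable_indicator_inv {α : Type*} {s a : α → ℝ} (hs : 0 ≤ s)
    (ha : ∀ k, 0 < a k) {A : Set α} (hA : Summable (Aᶜ.indicator s)) {M : ℝ}
    (hM : ∀ n ∈ A, a n * s n ≤ M) {D : Set α} (hD : Summable (D.indicator fun k => (a k)⁻¹)) :
    Summable (D.indicator s) := by
  refine Summable.of_nonneg_of_le (Set.indicator_nonneg fun k _ => hs k) (fun n => ?_)
    (hA.add (hD.mul_left (max M 0)))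
  have hA_nonneg : 0 ≤ Aᶜ.indicator s n := Set.indicator_nonneg (fun k _ => hs k) n
  by_cases hnD : n ∈ D
  · by_cases hnA : n ∈ A
    · have hsn : s n ≤ max M 0 * (a n)⁻¹ := by
        rw [← div_eq_mul_inv, le_div_iff₀ (ha n), mul_comm]
        exact (hM n hnA).trans (le_max_left M 0)
      simp only [Set.indicator_of_mem hnD]
      linarith
    · have : 0 ≤ max M 0 * (a n)⁻¹ := mul_nonneg (le_max_right M 0) (inv_pos.2 (ha n)).le
      simp only [Set.indicator_of_mem hnD, Set.indicator_of_mem (Set.mem_compl hnA)]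
      linarith
  · simp only [Set.indicator_of_notMem hnD, mul_zero, add_zero]
    exact hA_nonneg

theorem exists_not_summable_indicator_summable_indicator_inv {α : Type*} {s a : α → ℝ}
    (hs₀ : 0 ≤ s) (hs₁ : ∀ k, s k ≤ 1) (ha : ∀ k, 0 < a k)
    (hlarge : ∀ M : ℝ, ¬Summable ({k | M < a k * s k}.indicator s)) :
    ∃ D : Set α, ¬Summable (D.indicator s) ∧ Summable (D.indicator fun k => (a k)⁻¹) := by
  classical
  obtain ⟨F, hdisj, hF⟩ := exists_pairwise_disjoint_finset_seq
    (fun n F => ↑F ⊆ {k | 2 ^ n < a k * s k} ∧ 1 ≤ ∑ k ∈ F, s k ∧ ∑ k ∈ F, s k ≤ 2)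
    fun n => exists_finset_disjoint_subset_one_le_sum_le_two hs₀ hs₁ (hlarge (2 ^ n))
  refine ⟨⋃ n, (F n : Set α), ?_, ?_⟩
  · rw [summable_indicator_iUnion_finset_iff hs₀ hdisj]
    intro hsum
    obtain ⟨n, hn⟩ := (hsum.tendsto_atTop_zero.eventually_lt_const one_pos).exists
    exact (hF n).2.1.not_gt hn
  · rw [summable_indicator_iUnion_finset_iff (fun k => (inv_pos.2 (ha k)).le) hdisj]
    refine Summable.of_nonneg_of_le (fun n => sum_nonneg fun k _ => (inv_pos.2 (ha k)).le)
      (fun n => ?_) (summable_geometric_two.mul_left 2)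
    obtain ⟨hFE, -, hF₂⟩ := hF n
    have hpow : (0 : ℝ) < 2 ^ n := by positivity
    calc ∑ k ∈ F n, (a k)⁻¹ ≤ ∑ k ∈ F n, s k / 2 ^ n := by
          refine sum_le_sum fun k hk => ?_
          rw [le_div_iff₀ hpow, inv_mul_eq_div, div_le_iff₀ (ha k), mul_comm]
          exact (hFE hk).le
      _ = (∑ k ∈ F n, s k) / 2 ^ n := (sum_div _ _ _).symm
      _ ≤ 2 * (1 / 2) ^ n := by
          rw [one_div_pow, ← div_eq_mul_one_div]
          gcongr

theorem stmt_7_general (s : ℕ → ℝ) (hs : ∀ k, s k ∈ Set.Icc (0 : ℝ) 1)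
    (a : ℕ → ℝ) (ha : ∀ k, 0 < a k) :
    (∀ D : Set ℕ, ¬ Summable (Set.indicator D s) →
        ¬ Summable (Set.indicator D (fun k => (a k)⁻¹))) ↔
      (∃ A : Set ℕ, Summable (Set.indicator Aᶜ s) ∧
        ∃ M : ℝ, ∀ n ∈ A, a n * s n ≤ M) := by
  have hs₀ : 0 ≤ s := fun k => (hs k).1
  constructor
  · intro h
    by_contra! hunbounded
    obtain ⟨D, hDs, hDa⟩ := exists_not_summable_indicator_summable_indicator_inv hs₀
      (fun k => (hs k).2) ha fun M hM => by
        obtain ⟨n, hn, hlt⟩ := hunbounded _ (by rwa [compl_compl]) M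
        exact hn hlt
    exact h D hDs hDa
  · rintro ⟨A, hA, M, hM⟩ D hDs hDa
    exact hDs (summable_indicator_of_summable_indicator_inv hs₀ ha hA hM hDa)

/-- Characterisation of `(𝔉ˢ,1)`-admissibility: `∑_{k∈D} a_k⁻¹ = ∞` for every
`D` with `∑_{k∈D} s_k = ∞` iff `(aₙ sₙ)` is bounded along some `A` with
summable complement. -/
theorem stmt_7 (s : ℕ → ℝ) (hs : ∀ k, s k ∈ Set.Icc (0 : ℝ) 1)
    (hdiv : ¬ Summable s) (a : ℕ → ℝ) (ha : ∀ k, 0 < a k) :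
    (∀ D : Set ℕ, ¬ Summable (Set.indicator D s) →
        ¬ Summable (Set.indicator D (fun k => (a k)⁻¹))) ↔
      (∃ A : Set ℕ, Summable (Set.indicator Aᶜ s) ∧
        ∃ M : ℝ, ∀ n ∈ A, a n * s n ≤ M) :=
  stmt_7_general s hs a ha
end

section
/- Let α ∈ (0, 1/2) and s_n = n^{-α}. Then every sequence (a_n) ⊂ [1, ∞) that is (𝔉^s, 1)-admissible (i.e., ∑_{n∈D} a_n^{-1} = ∞ whenever ∑_{n∈D} n^{-α} = ∞) satisfies inf_n a_n / √n = 0. -/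
/-- Key gap estimate: for `x ≥ 1` and `c ≥ 2`, `x^c + 2 ≤ (x+1)^c`. -/
lemma gap_lemma {c : ℝ} (hc : 2 ≤ c) {x : ℝ} (hx : 1 ≤ x) :
    x ^ c + 2 ≤ (x + 1) ^ c := by
  have hx0 : 0 < x := lt_of_lt_of_le one_pos hx
  have h1 : (1 + 1/x : ℝ) ^ c ≥ 1 + c * (1/x) :=
    one_add_mul_self_le_rpow_one_add (by have := one_div_pos.mpr hx0; linarith) (by linarith)
  have hxc : (0:ℝ) < x ^ c := Real.rpow_pos_of_pos hx0 c
  have key : (x + 1) ^ c = x ^ c * (1 + 1/x) ^ c := by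
    rw [← Real.mul_rpow (le_of_lt hx0) (by positivity)]
    congr 1
    field_simp
  rw [key]
  have h2 : x ^ c * (1 + 1/x) ^ c ≥ x ^ c * (1 + c * (1/x)) :=
    mul_le_mul_of_nonneg_left h1 hxc.le
  have h3 : x ^ c * (1 + c * (1/x)) = x ^ c + c * x ^ (c - 1) := by
    rw [Real.rpow_sub hx0, Real.rpow_one]
    field_simp
  have h4 : (1:ℝ) ≤ x ^ (c - 1) := Real.one_le_rpow hx (by linarith)
  nlinarith [Real.rpow_pos_of_pos hx0 (c-1)]

/-- The summable filter of `sₙ = n^{-α}`, `0 < α < 1/2`, is slow: every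
`(𝔉ˢ,1)`-admissible sequence `(aₙ) ⊂ [1,∞)` has `inf aₙ/√n = 0`. -/
theorem stmt_16 (α : ℝ) (hα0 : 0 < α) (hα : α < 1 / 2)
    (a : ℕ → ℝ) (ha : ∀ n, 1 ≤ a n)
    (hadm : ∀ D : Set ℕ,
      ¬ Summable (Set.indicator D (fun n => (n : ℝ) ^ (-α))) →
      ¬ Summable (Set.indicator D (fun n => (a n)⁻¹))) :
    ∀ ε : ℝ, 0 < ε → ∃ n : ℕ, 0 < n ∧ a n / Real.sqrt n < ε := by
  intro ε hε
  by_contra hcon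
  push_neg at hcon
  -- hcon : ∀ n, 0 < n → ε ≤ a n / √n
  set c : ℝ := α⁻¹ with hc_def
  have hc2 : 2 < c := by
    rw [hc_def]
    rw [show (2:ℝ) = (1/2)⁻¹ by norm_num]
    exact (inv_lt_inv₀ (by norm_num) hα0).mpr hα
  have hcα : c * α = 1 := inv_mul_cancel₀ (ne_of_gt hα0)
  set f : ℕ → ℕ := fun k => ⌈((k:ℝ) + 1) ^ c⌉₊ with hf_def
  have hfl : ∀ k : ℕ, ((k:ℝ) + 1) ^ c ≤ (f k : ℝ) := fun k => Nat.le_ceil _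
  have hone : ∀ k : ℕ, (1:ℝ) ≤ ((k:ℝ) + 1) ^ c := fun k =>
    Real.one_le_rpow (by push_cast; linarith [Nat.cast_nonneg (α := ℝ) k]) (by linarith)
  have hfu : ∀ k, (f k : ℝ) ≤ ((k:ℝ) + 2) ^ c := by
    intro k
    have h1 : (f k : ℝ) < ((k:ℝ) + 1) ^ c + 1 :=
      Nat.ceil_lt_add_one (by positivity)
    have h2 := gap_lemma hc2.le (x := (k:ℝ) + 1) (by linarith [Nat.cast_nonneg (α := ℝ) k])
    have : ((k:ℝ) + 1 + 1) = (k:ℝ) + 2 := by ring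
    rw [this] at h2
    linarith
  have hfpos : ∀ k, 0 < f k := by
    intro k
    have := hone k
    exact_mod_cast lt_of_lt_of_le (by norm_num : (0:ℝ) < 1) ((hone k).trans (hfl k))
  have hinj : Function.Injective f := by
    have : StrictMono f := by
      apply strictMono_nat_of_lt_succ
      intro k
      have h1 : (f k : ℝ) < ((k:ℝ) + 1) ^ c + 1 := Nat.ceil_lt_add_one (by positivity)
      have h2 := gap_lemma hc2.le (x := (k:ℝ) + 1) (by linarith [Nat.cast_nonneg (α := ℝ) k])
      have h3 : ((k:ℝ) + 1 + 1) ^ c ≤ (f (k+1) : ℝ) := by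
        have := hfl (k+1)
        push_cast at this ⊢
        convert this using 3 <;> ring
      have : (f k : ℝ) < (f (k+1) : ℝ) := by linarith
      exact_mod_cast this
    exact this.injective
  set D : Set ℕ := Set.range f with hD_def
  -- Step A: indicator D (n ^ (-α)) is not summable
  have stepA : ¬ Summable (Set.indicator D (fun n => (n : ℝ) ^ (-α))) := by
    intro hS
    have hS2 : Summable (fun k => ((f k : ℝ)) ^ (-α)) := by
      have := hS.comp_injective hinj
      exact this.congr (fun k => by
        rw [Function.comp_apply, Set.indicator_of_mem (Set.mem_range_self k)])
    have hharm : Summable (fun k : ℕ => ((k:ℝ) + 2)⁻¹) := by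
      apply hS2.of_nonneg_of_le (fun k => by positivity)
      intro k
      have h1 : ((k:ℝ) + 2)⁻¹ = (((k:ℝ) + 2) ^ c) ^ (-α) := by
        rw [← Real.rpow_mul (by positivity)]
        have : c * (-α) = -1 := by rw [mul_neg, hcα]
        rw [this, Real.rpow_neg_one]
      rw [h1]
      exact Real.rpow_le_rpow_of_nonpos
        (lt_of_lt_of_le one_pos ((hone k).trans (hfl k))) (hfu k) (by linarith)
    have : Summable (fun k : ℕ => ((k:ℕ):ℝ)⁻¹) := by
      rw [← summable_nat_add_iff 2]
      exact hharm.congr (fun k => by push_cast; rfl)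
    exact Real.not_summable_natCast_inv this
  -- Step B: indicator D (a n)⁻¹ is summable
  have stepB : Summable (Set.indicator D (fun n => (a n)⁻¹)) := by
    rw [← Function.Injective.summable_iff hinj (fun x hx => Set.indicator_of_notMem hx _)]
    have heq : (Set.indicator D (fun n => (a n)⁻¹)) ∘ f = fun k => (a (f k))⁻¹ := by
      funext k
      rw [Function.comp_apply, Set.indicator_of_mem (Set.mem_range_self k)]
    rw [heq]
    have hmaj : Summable (fun k : ℕ => ε⁻¹ * (((k:ℝ) + 1) ^ (c/2))⁻¹) := by
      apply Summable.mul_left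
      have : Summable (fun k : ℕ => (((k:ℝ)) ^ (c/2))⁻¹) := by
        rw [Real.summable_nat_rpow_inv]
        linarith
      rw [← summable_nat_add_iff 1] at this
      exact this.congr (fun k => by norm_num)
    apply hmaj.of_nonneg_of_le (fun k => inv_nonneg.mpr (zero_le_one.trans (ha _)))
    intro k
    have hfk1 : 1 ≤ f k := hfpos k
    have hsqrt : ((k:ℝ) + 1) ^ (c/2) ≤ Real.sqrt (f k) := by
      rw [Real.sqrt_eq_rpow]
      have : ((k:ℝ) + 1) ^ (c/2) = (((k:ℝ) + 1) ^ c) ^ ((1:ℝ)/2) := by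
        rw [← Real.rpow_mul (by positivity)]
        congr 1; ring
      rw [this]
      exact Real.rpow_le_rpow (by positivity) (hfl k) (by norm_num)
    have hlow : ε * ((k:ℝ) + 1) ^ (c/2) ≤ a (f k) := by
      have h0 : (0:ℝ) < Real.sqrt (f k) := Real.sqrt_pos.mpr (by exact_mod_cast hfpos k)
      have h1 : ε * Real.sqrt (f k) ≤ a (f k) := by
        have h := hcon (f k) (hfpos k)
        rw [le_div_iff₀ h0] at h
        linarith
      calc ε * ((k:ℝ) + 1) ^ (c/2) ≤ ε * Real.sqrt (f k) :=
            mul_le_mul_of_nonneg_left hsqrt hε.le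
        _ ≤ a (f k) := h1
    have hpos : (0:ℝ) < ε * ((k:ℝ) + 1) ^ (c/2) := by positivity
    calc (a (f k))⁻¹ ≤ (ε * ((k:ℝ) + 1) ^ (c/2))⁻¹ := by
          apply inv_anti₀ hpos hlow
      _ = ε⁻¹ * (((k:ℝ) + 1) ^ (c/2))⁻¹ := by rw [mul_inv]
  exact hadm D stepA stepB
end

section
/- Let H be a separable infinite-dimensional Hilbert space with orthonormal basis (e_n), and let (a_n) be positive reals with ∑_n a_n^{-2} = ∞. Then 0 is a weak cluster point of the sequence (a_n e_n): for every finite family h_1,…,h_s ∈ H, ε > 0, and N ∈ ℕ there exists m ≥ N with |a_m ⟨e_m, h_k⟩| < ε for all k. -/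
/-- In a separable infinite-dimensional Hilbert space with orthonormal basis
`(eₙ)`, if `∑ aₙ⁻² = ∞` then `0` is a weak cluster point of `(aₙ eₙ)`. -/
theorem stmt_18 {H : Type*} [NormedAddCommGroup H] [InnerProductSpace ℝ H]
    [CompleteSpace H] (e : HilbertBasis ℕ ℝ H)
    (a : ℕ → ℝ) (ha : ∀ n, 0 < a n)
    (hdiv : ¬ Summable (fun n => (a n ^ 2)⁻¹)) :
    ∀ (s : Finset H) (ε : ℝ), 0 < ε → ∀ N : ℕ,
      ∃ m ≥ N, ∀ h ∈ s, |a m * (inner ℝ (e m) h : ℝ)| < ε := by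
  intro s ε hε N
  by_contra hc
  push_neg at hc
  set g : ℕ → ℝ := fun n => ∑ h ∈ s, (inner ℝ (e n) h : ℝ) ^ 2 with hgdef
  have hg : Summable g := by
    apply summable_sum
    intro h _
    have := e.summable_inner_mul_inner h h
    convert this using 2 with n
    · rfl
    rw [real_inner_comm (e n) h]
    ring
  have key : ∀ m ≥ N, (a m ^ 2)⁻¹ ≤ ε⁻¹ ^ 2 * g m := by
    intro m hm
    obtain ⟨h, hs, hge⟩ := hc m hm
    have h1 : ε ^ 2 ≤ (a m) ^ 2 * (inner ℝ (e m) h : ℝ) ^ 2 := by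
      calc ε ^ 2 ≤ |a m * (inner ℝ (e m) h : ℝ)| ^ 2 := by
            exact pow_le_pow_left₀ hε.le hge 2
        _ = (a m) ^ 2 * (inner ℝ (e m) h : ℝ) ^ 2 := by
            rw [sq_abs]; ring
    have h2 : (inner ℝ (e m) h : ℝ) ^ 2 ≤ g m :=
      Finset.single_le_sum (f := fun i => (inner ℝ (e m) i : ℝ) ^ 2)
        (fun i _ => sq_nonneg _) hs
    have ha2 : (0:ℝ) < a m ^ 2 := pow_pos (ha m) 2
    have he2 : (0:ℝ) < ε ^ 2 := by positivity
    rw [inv_le_iff_one_le_mul₀ ha2]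
    have : ε ^ 2 ≤ a m ^ 2 * g m := le_trans h1 (by nlinarith)
    calc (1:ℝ) = ε⁻¹ ^ 2 * ε ^ 2 := by field_simp
      _ ≤ ε⁻¹ ^ 2 * (a m ^ 2 * g m) := by
          apply mul_le_mul_of_nonneg_left this (by positivity)
      _ = ε⁻¹ ^ 2 * g m * a m ^ 2 := by ring
  apply hdiv
  rw [← summable_nat_add_iff N]
  apply Summable.of_nonneg_of_le (fun n => by positivity)
    (fun n => key (n + N) (Nat.le_add_left N n))
  exact ((summable_nat_add_iff N).mpr (hg.mul_left _))
end

section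
/- Let H be a separable infinite-dimensional Hilbert space with orthonormal basis (e_n), 𝔉 a free filter on ℕ, and (a_n) positive reals such that ∑_{n ∈ I} a_n^{-2} = ∞ for every 𝔉-stationary set I. Then 𝔉-lim ⟨a_n e_n, h⟩ = 0 for every h ∈ H. -/
/-- If `∑_{n∈I} aₙ⁻² = ∞` for every `𝔉`-stationary `I`, then
`𝔉-lim ⟨aₙ eₙ, h⟩ = 0` for every `h` in the Hilbert space. -/
theorem stmt_19 {H : Type*} [NormedAddCommGroup H] [InnerProductSpace ℝ H]
    [CompleteSpace H] (e : HilbertBasis ℕ ℝ H)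
    (F : Filter ℕ) (hF : Filter.cofinite ≤ F)
    (a : ℕ → ℝ) (ha : ∀ n, 0 < a n)
    (hadm : ∀ I : Set ℕ, Iᶜ ∉ F →
      ¬ Summable (Set.indicator I (fun n => (a n ^ 2)⁻¹))) :
    ∀ h : H, Filter.Tendsto (fun n => (inner ℝ (a n • e n) h : ℝ)) F (nhds 0) := by
  intro h
  by_contra hcon
  rw [Metric.tendsto_nhds] at hcon
  push_neg at hcon
  obtain ⟨ε, hε, hne⟩ := hcon
  set c : ℕ → ℝ := fun n => (inner ℝ (a n • e n) h : ℝ) with hc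
  set I : Set ℕ := {n | ε ≤ |c n|} with hI
  have hIc : Iᶜ ∉ F := by
    intro hmem
    apply hne
    filter_upwards [hmem] with n hn
    simp only [I, Set.mem_compl_iff, Set.mem_setOf_eq, not_le] at hn
    simpa [Real.dist_eq] using hn
  apply hadm I hIc
  -- summability of inner products squared
  have hsum : Summable (fun n => (inner ℝ (e n) h : ℝ) ^ 2) := by
    have := (e.hasSum_inner_mul_inner h h).summable
    refine this.congr fun n => ?_
    rw [real_inner_comm h (e n), sq]
  have hsum2 : Summable (fun n => ε⁻¹ ^ 2 * (inner ℝ (e n) h : ℝ) ^ 2) :=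
    hsum.mul_left _
  refine Summable.of_nonneg_of_le (fun n => ?_) (fun n => ?_) hsum2
  · exact Set.indicator_nonneg (fun n _ => by positivity) n
  · by_cases hn : n ∈ I
    · rw [Set.indicator_of_mem hn]
      have hcn : ε ≤ |c n| := hn
      have hceq : c n = a n * (inner ℝ (e n) h : ℝ) := by
        simp [c, real_inner_smul_left]
      have h1 : ε / a n ≤ |(inner ℝ (e n) h : ℝ)| := by
        rw [div_le_iff₀ (ha n)]
        calc ε ≤ |c n| := hcn
          _ = |(inner ℝ (e n) h : ℝ)| * a n := by
              rw [hceq, abs_mul, abs_of_pos (ha n), mul_comm]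
      have h2 : (ε / a n) ^ 2 ≤ (inner ℝ (e n) h : ℝ) ^ 2 := by
        rw [← sq_abs ((inner ℝ (e n) h : ℝ))]
        exact pow_le_pow_left₀ (le_of_lt (div_pos hε (ha n))) h1 2
      calc (a n ^ 2)⁻¹ = ε⁻¹ ^ 2 * (ε / a n) ^ 2 := by
            field_simp
          _ ≤ ε⁻¹ ^ 2 * (inner ℝ (e n) h : ℝ) ^ 2 := by
            exact mul_le_mul_of_nonneg_left h2 (by positivity)
    · rw [Set.indicator_of_notMem hn]
      positivity
end
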